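/- arXiv:2309.16278 — 5 statements merged into one kernel-verified Lean document; each statement's English description precedes it below -/
import Mathlib

section
/- Let ν be a log-concave probability measure on ℝ and p ≥ 1. Then there exists a constant C_p depending only on p such that (∫ |t|^p dν)^{1/p} ≤ C_p ∫ |t| dν. -/
/-!
Let `m = ∫ |t| dν`. By Markov's inequality the density of `ν` is at least `1 / (16 m)` somewhere
in `[-2m, 2m]` and at most `1 / (32 m)` somewhere in `[4m, 20m]`. Log-concavity then makes the
density at least halve over every further stretch of length `22 m`, so beyond `20 m` it is
dominated by `e^{-t / (32 m)} / (16 m)`. Integrating `t^p` against this exponential tail gives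
a Gamma-function bound of order `m^p`; the left tail follows by reflection, and the middle part
contributes at most `(20 m)^p`. Dirac masses are immediate.
-/

open MeasureTheory Real Set

/-- A measure on `ℝ` is log-concave if it is a Dirac mass or absolutely continuous
with respect to Lebesgue measure with log-concave density (i.e. density `e^{-φ}` with
`φ : ℝ → (-∞,∞]` convex). -/
def IsLogConcaveMeasure (ν : Measure ℝ) : Prop :=
  (∃ x : ℝ, ν = Measure.dirac x) ∨
  ∃ g : ℝ → ENNReal, (∀ t, g t ≠ ⊤) ∧
    (∀ x y a b : ℝ, 0 ≤ a → 0 ≤ b → a + b = 1 →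
      g x ^ a * g y ^ b ≤ g (a * x + b * y)) ∧
    ν = volume.withDensity g

open scoped ENNReal

structure IsLogConcaveDensity (g : ℝ → ℝ≥0∞) : Prop where
  ne_top : ∀ t, g t ≠ ⊤
  rpow_mul_rpow_le : ∀ x y a b : ℝ, 0 ≤ a → 0 ≤ b → a + b = 1 →
    g x ^ a * g y ^ b ≤ g (a * x + b * y)

namespace IsLogConcaveDensity

variable {g : ℝ → ℝ≥0∞}

theorem min_le_of_mem_Icc (hg : IsLogConcaveDensity g) {x y z : ℝ} (hz : z ∈ Icc x y) :
    min (g x) (g y) ≤ g z := by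
  obtain rfl | hxz := hz.1.eq_or_lt
  · exact min_le_left _ _
  have hxy : 0 < y - x := by linarith [hz.2]
  have ha : 0 ≤ (y - z) / (y - x) := div_nonneg (by linarith [hz.2]) hxy.le
  have hb : 0 ≤ (z - x) / (y - x) := div_nonneg (by linarith) hxy.le
  have hab : (y - z) / (y - x) + (z - x) / (y - x) = 1 := by field_simp; ring
  have hcomb : (y - z) / (y - x) * x + (z - x) / (y - x) * y = z := by field_simp; ring
  calc min (g x) (g y)
      = min (g x) (g y) ^ ((y - z) / (y - x)) * min (g x) (g y) ^ ((z - x) / (y - x)) := by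
        rw [← ENNReal.rpow_add_of_nonneg _ _ ha hb, hab, ENNReal.rpow_one]
    _ ≤ g x ^ ((y - z) / (y - x)) * g y ^ ((z - x) / (y - x)) := by
        gcongr
        exacts [min_le_left _ _, min_le_right _ _]
    _ ≤ g ((y - z) / (y - x) * x + (z - x) / (y - x) * y) := hg.rpow_mul_rpow_le x y _ _ ha hb hab
    _ = g z := by rw [hcomb]

theorem measurable (hg : IsLogConcaveDensity g) : Measurable g :=
  measurable_of_Ioi fun _ => OrdConnected.measurableSet
    ⟨fun _ hx _ hy _ hz => lt_of_lt_of_le (lt_min hx hy) (hg.min_le_of_mem_Icc hz)⟩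

theorem comp_neg (hg : IsLogConcaveDensity g) : IsLogConcaveDensity (fun t => g (-t)) where
  ne_top t := hg.ne_top (-t)
  rpow_mul_rpow_le x y a b ha hb hab := by
    have h := hg.rpow_mul_rpow_le (-x) (-y) a b ha hb hab
    rwa [show a * -x + b * -y = -(a * x + b * y) by ring] at h

theorem toReal_rpow_mul_rpow_le (hg : IsLogConcaveDensity g) (x y a b : ℝ) (ha : 0 ≤ a)
    (hb : 0 ≤ b) (hab : a + b = 1) :
    (g x).toReal ^ a * (g y).toReal ^ b ≤ (g (a * x + b * y)).toReal := by
  simpa [ENNReal.toReal_mul, ENNReal.toReal_rpow] using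
    ENNReal.toReal_mono (hg.ne_top _) (hg.rpow_mul_rpow_le x y a b ha hb hab)

end IsLogConcaveDensity

theorem le_mul_exp_of_two_mul_le {f : ℝ → ℝ} (hf : ∀ x, 0 ≤ f x)
    (hlc : ∀ x y a b : ℝ, 0 ≤ a → 0 ≤ b → a + b = 1 → f x ^ a * f y ^ b ≤ f (a * x + b * y))
    {x₁ x₀ x : ℝ} (h₁₀ : x₁ < x₀) (hx : x₀ ≤ x) (hpos : 0 < f x₁) (hhalf : 2 * f x₀ ≤ f x₁) :
    f x ≤ f x₀ * exp (-(log 2 / (x₀ - x₁) * (x - x₀))) := by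
  obtain hfx | hfx := (hf x).eq_or_lt
  · rw [← hfx]; exact mul_nonneg (hf x₀) (exp_pos _).le
  have hd : 0 < x - x₁ := by linarith
  have hab : (x - x₀) / (x - x₁) + (x₀ - x₁) / (x - x₁) = 1 := by field_simp; ring
  have hcomb : (x - x₀) / (x - x₁) * x₁ + (x₀ - x₁) / (x - x₁) * x = x₀ := by field_simp; ring
  have hrate : (x₀ - x₁) / (x - x₁) * (log 2 / (x₀ - x₁) * (x - x₀)) =
      (x - x₀) / (x - x₁) * log 2 := by
    field_simp [show x₀ - x₁ ≠ 0 by linarith]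
  set a := (x - x₀) / (x - x₁)
  set b := (x₀ - x₁) / (x - x₁)
  have ha : 0 ≤ a := div_nonneg (by linarith) hd.le
  have hb : 0 < b := div_pos (by linarith) hd
  have key := hlc x₁ x a b ha hb.le hab
  rw [hcomb] at key
  have hprod : 0 < f x₁ ^ a * f x ^ b := by positivity
  have hx₀ : 0 < f x₀ := hprod.trans_le key
  have hconc := log_le_log hprod key
  rw [log_mul (by positivity) (by positivity), log_rpow hpos, log_rpow hfx] at hconc
  have hdrop : log 2 + log (f x₀) ≤ log (f x₁) := by
    rw [← log_mul two_ne_zero hx₀.ne']; exact log_le_log (by positivity) hhalf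
  rw [← exp_log hfx, ← exp_log hx₀, ← exp_add, exp_le_exp]
  -- multiplied by `b`, the goal is `hconc` plus `a` times `hdrop`
  refine le_of_mul_le_mul_left ?_ hb
  have hsplit : a * log (f x₀) + b * log (f x₀) = log (f x₀) := by rw [← add_mul, hab, one_mul]
  linarith [mul_le_mul_of_nonneg_left hdrop ha]

theorem lintegral_Ioi_rpow_mul_exp_le {p c R : ℝ} (hp : -1 < p) (hc : 0 < c) (hR : 0 ≤ R) :
    ∫⁻ t in Ioi R, ENNReal.ofReal (t ^ p * exp (-(c * t))) ≤
      ENNReal.ofReal ((1 / c) ^ (p + 1) * Gamma (p + 1)) := by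
  have hint : IntegrableOn (fun t : ℝ => t ^ p * exp (-(c * t))) (Ioi 0) := by
    simpa using integrableOn_rpow_mul_exp_neg_mul_rpow hp one_pos hc
  calc ∫⁻ t in Ioi R, ENNReal.ofReal (t ^ p * exp (-(c * t)))
      ≤ ∫⁻ t in Ioi 0, ENNReal.ofReal (t ^ p * exp (-(c * t))) :=
        lintegral_mono_set (Ioi_subset_Ioi hR)
    _ = ENNReal.ofReal ((1 / c) ^ (p + 1) * Gamma (p + 1)) := by
        rw [← ofReal_integral_eq_lintegral_ofReal hint, ← integral_rpow_mul_exp_neg_mul_Ioi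
          (by linarith) hc, add_sub_cancel_right]
        filter_upwards [ae_restrict_mem measurableSet_Ioi] with t ht
        exact mul_nonneg (rpow_nonneg (le_of_lt ht) p) (exp_pos _).le

theorem measure_abs_ge_le_ofReal_div {ν : Measure ℝ} {m a : ℝ}
    (hm : ∫⁻ t, ENNReal.ofReal |t| ∂ν ≤ ENNReal.ofReal m) (ha : 0 < a) :
    ν {t | a ≤ |t|} ≤ ENNReal.ofReal (m / a) := by
  calc ν {t | a ≤ |t|} = ν {t | ENNReal.ofReal a ≤ ENNReal.ofReal |t|} := by
        simp_rw [ENNReal.ofReal_le_ofReal_iff (abs_nonneg _)]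
    _ ≤ (∫⁻ t, ENNReal.ofReal |t| ∂ν) / ENNReal.ofReal a :=
        meas_ge_le_lintegral_div measurable_abs.ennreal_ofReal.aemeasurable (by simpa using ha)
          ENNReal.ofReal_ne_top
    _ ≤ ENNReal.ofReal m / ENNReal.ofReal a := by gcongr
    _ = ENNReal.ofReal (m / a) := (ENNReal.ofReal_div_of_pos ha).symm

section Density

variable {g : ℝ → ℝ≥0∞}

theorem withDensity_Icc_le {a b c : ℝ} (hc : 0 ≤ c) (h : ∀ x ∈ Icc a b, g x ≤ ENNReal.ofReal c) :
    volume.withDensity g (Icc a b) ≤ ENNReal.ofReal (c * (b - a)) := by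
  rw [withDensity_apply _ measurableSet_Icc, ENNReal.ofReal_mul hc, ← Real.volume_Icc,
    ← setLIntegral_const]
  exact setLIntegral_mono' measurableSet_Icc h

theorem le_withDensity_Icc {a b c : ℝ} (hc : 0 ≤ c) (h : ∀ x ∈ Icc a b, ENNReal.ofReal c ≤ g x) :
    ENNReal.ofReal (c * (b - a)) ≤ volume.withDensity g (Icc a b) := by
  rw [withDensity_apply _ measurableSet_Icc, ENNReal.ofReal_mul hc, ← Real.volume_Icc,
    ← setLIntegral_const]
  exact setLIntegral_mono' measurableSet_Icc h

variable {m : ℝ} (hm0 : 0 < m)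
  (hm : ∫⁻ t, ENNReal.ofReal |t| ∂volume.withDensity g ≤ ENNReal.ofReal m)
include hm0 hm

theorem exists_mem_Icc_ofReal_le [IsProbabilityMeasure (volume.withDensity g)] :
    ∃ x ∈ Icc (-(2 * m)) (2 * m), ENNReal.ofReal (1 / (16 * m)) ≤ g x := by
  by_contra! hsmall
  have hin : volume.withDensity g (Icc (-(2 * m)) (2 * m)) ≤ ENNReal.ofReal (1 / 4) := by
    convert withDensity_Icc_le (by positivity) fun x hx => (hsmall x hx).le using 2
    field_simp; ring
  have hout : volume.withDensity g (Icc (-(2 * m)) (2 * m))ᶜ ≤ ENNReal.ofReal (1 / 2) :=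
    calc _ ≤ volume.withDensity g {t | 2 * m ≤ |t|} :=
          measure_mono fun t (ht : t ∉ _) => (not_le.1 fun h => ht (abs_le.1 h)).le
      _ ≤ ENNReal.ofReal (m / (2 * m)) := measure_abs_ge_le_ofReal_div hm (by positivity)
      _ = ENNReal.ofReal (1 / 2) := by congr 1; field_simp
  have : (1 : ℝ≥0∞) ≤ ENNReal.ofReal (3 / 4) :=
    calc (1 : ℝ≥0∞) = volume.withDensity g univ := measure_univ.symm
      _ = volume.withDensity g (Icc (-(2 * m)) (2 * m)) +
          volume.withDensity g (Icc (-(2 * m)) (2 * m))ᶜ :=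
        (measure_add_measure_compl measurableSet_Icc).symm
      _ ≤ ENNReal.ofReal (1 / 4) + ENNReal.ofReal (1 / 2) := add_le_add hin hout
      _ = ENNReal.ofReal (3 / 4) := by
        rw [← ENNReal.ofReal_add (by norm_num) (by norm_num)]; norm_num
  exact this.not_gt (ENNReal.ofReal_lt_one.2 (by norm_num))

theorem exists_mem_Icc_le_ofReal :
    ∃ x ∈ Icc (4 * m) (20 * m), g x ≤ ENNReal.ofReal (1 / (32 * m)) := by
  by_contra! hlarge
  have hin : ENNReal.ofReal (1 / 2) ≤ volume.withDensity g (Icc (4 * m) (20 * m)) := by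
    convert le_withDensity_Icc (by positivity) fun x hx => (hlarge x hx).le using 2
    field_simp; ring
  have hout : volume.withDensity g (Icc (4 * m) (20 * m)) ≤ ENNReal.ofReal (1 / 4) :=
    calc _ ≤ volume.withDensity g {t | 4 * m ≤ |t|} :=
          measure_mono fun t ht => ht.1.trans (le_abs_self t)
      _ ≤ ENNReal.ofReal (m / (4 * m)) := measure_abs_ge_le_ofReal_div hm (by positivity)
      _ = ENNReal.ofReal (1 / 4) := by congr 1; field_simp
  have := (ENNReal.ofReal_le_ofReal_iff (by norm_num)).1 (hin.trans hout)
  norm_num at this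

end Density

theorem withDensity_comp_neg (g : ℝ → ℝ≥0∞) :
    volume.withDensity (fun t => g (-t)) = (volume.withDensity g).map Neg.neg := by
  ext s hs
  rw [Measure.map_apply measurable_neg hs, withDensity_apply _ hs,
    withDensity_apply _ (measurable_neg hs)]
  simpa using (Measure.measurePreserving_neg (volume : Measure ℝ)).setLIntegral_comp_preimage_emb
    measurableEmbedding_neg g (Neg.neg ⁻¹' s)

theorem setLIntegral_Icc_abs_rpow_le {ν : Measure ℝ} [IsProbabilityMeasure ν] {p R : ℝ}
    (hp : 0 ≤ p) : ∫⁻ t in Icc (-R) R, ENNReal.ofReal (|t| ^ p) ∂ν ≤ ENNReal.ofReal (R ^ p) :=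
  calc ∫⁻ t in Icc (-R) R, ENNReal.ofReal (|t| ^ p) ∂ν
      ≤ ∫⁻ _ in Icc (-R) R, ENNReal.ofReal (R ^ p) ∂ν :=
        setLIntegral_mono' measurableSet_Icc fun t ht =>
          ENNReal.ofReal_le_ofReal (rpow_le_rpow (abs_nonneg t) (abs_le.2 ht) hp)
    _ = ENNReal.ofReal (R ^ p) * ν (Icc (-R) R) := setLIntegral_const _ _
    _ ≤ ENNReal.ofReal (R ^ p) := mul_le_of_le_one_right' prob_le_one

namespace IsLogConcaveDensity

variable {g : ℝ → ℝ≥0∞} (hg : IsLogConcaveDensity g) [IsProbabilityMeasure (volume.withDensity g)]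
  {m : ℝ} (hm0 : 0 < m) (hm : ∫⁻ t, ENNReal.ofReal |t| ∂volume.withDensity g ≤ ENNReal.ofReal m)
include hg hm0 hm

theorem le_ofReal_exp {t : ℝ} (ht : 20 * m ≤ t) :
    g t ≤ ENNReal.ofReal (1 / (16 * m) * exp (-((32 * m)⁻¹ * t))) := by
  obtain ⟨x₁, hx₁, hbig⟩ := exists_mem_Icc_ofReal_le hm0 hm
  obtain ⟨x₀, hx₀, hsmall⟩ := exists_mem_Icc_le_ofReal hm0 hm
  have hbig' : 1 / (16 * m) ≤ (g x₁).toReal :=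
    (ENNReal.ofReal_le_iff_le_toReal (hg.ne_top _)).1 hbig
  have hsmall' : (g x₀).toReal ≤ 1 / (32 * m) :=
    ENNReal.toReal_le_of_le_ofReal (by positivity) hsmall
  have hdecay := le_mul_exp_of_two_mul_le (fun _ => ENNReal.toReal_nonneg)
    hg.toReal_rpow_mul_rpow_le (by linarith [hx₁.2, hx₀.1]) (hx₀.2.trans ht)
    ((by positivity : 0 < 1 / (16 * m)).trans_le hbig')
    (by linarith [show 2 * (1 / (32 * m)) = 1 / (16 * m) by field_simp; ring])
  -- `x₀ - x₁ ≤ 22 m` and `x₀ ≤ 20 m`, while `20 / 32 < 22 / 32 < log 2`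
  have hlog2 := log_two_gt_d9
  have hrate : (32 * m)⁻¹ ≤ log 2 / (x₀ - x₁) := by
    rw [le_div_iff₀ (by linarith [hx₁.2, hx₀.1]), inv_mul_le_iff₀ (by positivity)]
    nlinarith [hx₁.1, hx₀.2]
  have hshift : exp ((32 * m)⁻¹ * x₀) ≤ 2 := by
    rw [← exp_log two_pos, exp_le_exp, inv_mul_le_iff₀ (by positivity)]
    nlinarith [hx₀.2]
  have hexp : exp (-(log 2 / (x₀ - x₁) * (t - x₀))) ≤ 2 * exp (-((32 * m)⁻¹ * t)) :=
    calc exp (-(log 2 / (x₀ - x₁) * (t - x₀))) ≤ exp (-((32 * m)⁻¹ * (t - x₀))) := by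
          gcongr; linarith [hx₀.2]
      _ = exp ((32 * m)⁻¹ * x₀) * exp (-((32 * m)⁻¹ * t)) := by rw [← exp_add]; ring_nf
      _ ≤ 2 * exp (-((32 * m)⁻¹ * t)) := by gcongr
  rw [← ENNReal.ofReal_toReal (hg.ne_top t)]
  refine ENNReal.ofReal_le_ofReal (hdecay.trans ?_)
  calc (g x₀).toReal * exp (-(log 2 / (x₀ - x₁) * (t - x₀)))
      ≤ 1 / (32 * m) * (2 * exp (-((32 * m)⁻¹ * t))) := by gcongr
    _ = 1 / (16 * m) * exp (-((32 * m)⁻¹ * t)) := by field_simp; ring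

variable {p : ℝ} (hp : 0 ≤ p)
include hp

theorem setLIntegral_Ioi_abs_rpow_le :
    ∫⁻ t in Ioi (20 * m), ENNReal.ofReal (|t| ^ p) ∂volume.withDensity g ≤
      ENNReal.ofReal (2 * 32 ^ p * Gamma (p + 1) * m ^ p) :=
  calc ∫⁻ t in Ioi (20 * m), ENNReal.ofReal (|t| ^ p) ∂volume.withDensity g
      = ∫⁻ t in Ioi (20 * m), g t * ENNReal.ofReal (|t| ^ p) :=
        setLIntegral_withDensity_eq_setLIntegral_mul _ hg.measurable (by fun_prop)
          measurableSet_Ioi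
    _ ≤ ∫⁻ t in Ioi (20 * m),
          ENNReal.ofReal (1 / (16 * m)) * ENNReal.ofReal (t ^ p * exp (-((32 * m)⁻¹ * t))) := by
        refine setLIntegral_mono' measurableSet_Ioi fun t (ht : 20 * m < t) => ?_
        have ht0 : 0 < t := by linarith
        calc g t * ENNReal.ofReal (|t| ^ p)
            ≤ ENNReal.ofReal (1 / (16 * m) * exp (-((32 * m)⁻¹ * t))) * ENNReal.ofReal (t ^ p) := by
              rw [abs_of_pos ht0]; gcongr; exact hg.le_ofReal_exp hm0 hm ht.le
          _ = ENNReal.ofReal (1 / (16 * m)) * ENNReal.ofReal (t ^ p * exp (-((32 * m)⁻¹ * t))) := by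
              rw [← ENNReal.ofReal_mul (by positivity), ← ENNReal.ofReal_mul (by positivity)]
              ring_nf
    _ = ENNReal.ofReal (1 / (16 * m)) *
          ∫⁻ t in Ioi (20 * m), ENNReal.ofReal (t ^ p * exp (-((32 * m)⁻¹ * t))) :=
        lintegral_const_mul' _ _ ENNReal.ofReal_ne_top
    _ ≤ ENNReal.ofReal (1 / (16 * m)) *
          ENNReal.ofReal ((1 / (32 * m)⁻¹) ^ (p + 1) * Gamma (p + 1)) := by
        gcongr
        exact lintegral_Ioi_rpow_mul_exp_le (by linarith) (by positivity) (by positivity)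
    _ = ENNReal.ofReal (2 * 32 ^ p * Gamma (p + 1) * m ^ p) := by
        rw [← ENNReal.ofReal_mul (by positivity), one_div (32 * m)⁻¹, inv_inv,
          rpow_add_one (by positivity), mul_rpow (by norm_num) hm0.le]
        congr 1
        field_simp
        ring

theorem setLIntegral_Iio_abs_rpow_le :
    ∫⁻ t in Iio (-(20 * m)), ENNReal.ofReal (|t| ^ p) ∂volume.withDensity g ≤
      ENNReal.ofReal (2 * 32 ^ p * Gamma (p + 1) * m ^ p) := by
  have hmap := withDensity_comp_neg g
  have : IsProbabilityMeasure (volume.withDensity fun t => g (-t)) := by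
    rw [hmap]; exact Measure.isProbabilityMeasure_map measurable_neg.aemeasurable
  have hm' : ∫⁻ t, ENNReal.ofReal |t| ∂volume.withDensity (fun t => g (-t)) ≤ ENNReal.ofReal m := by
    rw [hmap, lintegral_map (by fun_prop) measurable_neg]
    simpa only [abs_neg] using hm
  have h := hg.comp_neg.setLIntegral_Ioi_abs_rpow_le hm0 hm' hp
  rw [hmap, setLIntegral_map measurableSet_Ioi (by fun_prop) measurable_neg, neg_preimage,
    neg_Ioi] at h
  simpa only [abs_neg] using h

theorem lintegral_abs_rpow_le :
    ∫⁻ t, ENNReal.ofReal (|t| ^ p) ∂volume.withDensity g ≤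
      ENNReal.ofReal ((20 ^ p + 4 * 32 ^ p * Gamma (p + 1)) * m ^ p) := by
  have hcover : (univ : Set ℝ) = Iio (-(20 * m)) ∪ Icc (-(20 * m)) (20 * m) ∪ Ioi (20 * m) := by
    rw [Iio_union_Icc_eq_Iic (by linarith), Iic_union_Ioi]
  have htail : 0 ≤ 2 * 32 ^ p * Gamma (p + 1) * m ^ p := by positivity
  calc ∫⁻ t, ENNReal.ofReal (|t| ^ p) ∂volume.withDensity g
      = ∫⁻ t in Iio (-(20 * m)) ∪ Icc (-(20 * m)) (20 * m) ∪ Ioi (20 * m),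
          ENNReal.ofReal (|t| ^ p) ∂volume.withDensity g := by
        rw [← hcover, Measure.restrict_univ]
    _ ≤ ∫⁻ t in Iio (-(20 * m)), ENNReal.ofReal (|t| ^ p) ∂volume.withDensity g +
          ∫⁻ t in Icc (-(20 * m)) (20 * m), ENNReal.ofReal (|t| ^ p) ∂volume.withDensity g +
          ∫⁻ t in Ioi (20 * m), ENNReal.ofReal (|t| ^ p) ∂volume.withDensity g :=
        (lintegral_union_le _ _ _).trans (by gcongr; exact lintegral_union_le _ _ _)
    _ ≤ ENNReal.ofReal (2 * 32 ^ p * Gamma (p + 1) * m ^ p) + ENNReal.ofReal ((20 * m) ^ p) +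
          ENNReal.ofReal (2 * 32 ^ p * Gamma (p + 1) * m ^ p) := by
        gcongr
        exacts [hg.setLIntegral_Iio_abs_rpow_le hm0 hm hp, setLIntegral_Icc_abs_rpow_le hp,
          hg.setLIntegral_Ioi_abs_rpow_le hm0 hm hp]
    _ = ENNReal.ofReal ((20 ^ p + 4 * 32 ^ p * Gamma (p + 1)) * m ^ p) := by
        rw [← ENNReal.ofReal_add htail (by positivity), ← ENNReal.ofReal_add (by positivity) htail,
          mul_rpow (by norm_num) hm0.le]
        ring_nf

end IsLogConcaveDensity

theorem IsLogConcaveDensity.integral_abs_rpow_le {g : ℝ → ℝ≥0∞} (hg : IsLogConcaveDensity g)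
    [IsProbabilityMeasure (volume.withDensity g)] {p : ℝ} (hp : 1 ≤ p)
    (hint : Integrable (fun t => |t| ^ p) (volume.withDensity g)) :
    ∫ t, |t| ^ p ∂volume.withDensity g ≤
      (20 ^ p + 4 * 32 ^ p * Gamma (p + 1)) * (∫ t, |t| ∂volume.withDensity g) ^ p := by
  have hp0 : 0 ≤ p := by linarith
  have habs : Integrable (fun t => |t|) (volume.withDensity g) := by
    have h : Integrable (fun t : ℝ => ‖t‖ ^ (1 : ℝ)) (volume.withDensity g) :=
      integrable_norm_rpow_of_le aestronglyMeasurable_id zero_le_one hp0 hp hint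
    simpa only [Real.norm_eq_abs, rpow_one] using h
  have hm0 : 0 < ∫ t, |t| ∂volume.withDensity g := by
    have hsupp : Function.support (fun t : ℝ => |t|) = {0}ᶜ := by ext; simp
    rw [integral_pos_iff_support_of_nonneg_ae (ae_of_all _ fun t => abs_nonneg t) habs, hsupp,
      (prob_compl_eq_one_iff₀ (measurableSet_singleton 0).nullMeasurableSet).2
        (withDensity_absolutelyContinuous _ _ (measure_singleton 0))]
    exact one_pos
  rw [integral_eq_lintegral_of_nonneg_ae (ae_of_all _ fun t => by positivity)
    (continuous_abs.rpow_const fun _ => Or.inr hp0).aestronglyMeasurable]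
  exact ENNReal.toReal_le_of_le_ofReal (by positivity) (hg.lintegral_abs_rpow_le hm0
    (ofReal_integral_eq_lintegral_ofReal habs (ae_of_all _ fun t => abs_nonneg t)).ge hp0)

/-- Kahane–Khinchin inequality for log-concave probability measures on `ℝ`. -/
theorem stmt0 (p : ℝ) (hp : 1 ≤ p) :
    ∃ C : ℝ, 0 < C ∧ ∀ ν : Measure ℝ, IsProbabilityMeasure ν → IsLogConcaveMeasure ν →
      (∫ t, |t| ^ p ∂ν) ^ (1 / p) ≤ C * ∫ t, |t| ∂ν := by
  set K := 20 ^ p + 4 * 32 ^ p * Gamma (p + 1)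
  have hK : 1 ≤ K :=
    le_add_of_le_of_nonneg (one_le_rpow (by norm_num) (by linarith)) (by positivity)
  refine ⟨K ^ (1 / p), by positivity, fun ν hν hlog => ?_⟩
  rcases hlog with ⟨x, rfl⟩ | ⟨g, hne_top, hlc, rfl⟩
  · rw [integral_dirac, integral_dirac, ← rpow_mul (abs_nonneg x),
      mul_one_div_cancel (by positivity), rpow_one]
    exact le_mul_of_one_le_left (abs_nonneg x) (one_le_rpow hK (by positivity))
  have hg : IsLogConcaveDensity g := ⟨hne_top, hlc⟩
  by_cases hint : Integrable (fun t => |t| ^ p) (volume.withDensity g)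
  · calc (∫ t, |t| ^ p ∂volume.withDensity g) ^ (1 / p)
        ≤ (K * (∫ t, |t| ∂volume.withDensity g) ^ p) ^ (1 / p) :=
          rpow_le_rpow (by positivity) (hg.integral_abs_rpow_le hp hint) (by positivity)
      _ = K ^ (1 / p) * ∫ t, |t| ∂volume.withDensity g := by
          rw [mul_rpow (by positivity) (by positivity), ← rpow_mul (by positivity),
            mul_one_div_cancel (by positivity), rpow_one]
  · rw [integral_undef hint, zero_rpow (by positivity)]
    positivity
end

section
/- Let φ: ℝ → ℝ be a convex function with ∫_ℝ e^{-φ(s)} ds < ∞, and define χ(u) = -log ∫_{s < -u} e^{-φ(s)} ds. Then χ is convex on ℝ. -/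
open MeasureTheory Real Set

/-!
Write `H x = ∫_{s ≤ x} e^{-φ(s)} ds`, so that `χ u = -log H(-u)` and it suffices that `log H` is
concave, i.e. that `(log H)' = e^{-φ}/H` is antitone. For `s ≤ x ≤ y`, convexity of `φ` gives
`φ x + φ (s + (y - x)) ≤ φ s + φ y`; multiplying through by `e^{-φ}` and integrating over
`s ≤ x` yields `e^{-φ(y)} H(x) ≤ e^{-φ(x)} H(y)`, which is exactly the required monotonicity.
-/

theorem ConvexOn.map_add_map_le_of_mem_Icc {𝕜 : Type*} [Field 𝕜] [LinearOrder 𝕜]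
    [IsStrictOrderedRing 𝕜] {s : Set 𝕜} {f : 𝕜 → 𝕜} (hf : ConvexOn 𝕜 s f) {a b x y : 𝕜}
    (ha : a ∈ s) (hb : b ∈ s) (hx : x ∈ Icc a b) (hxy : x + y = a + b) :
    f x + f y ≤ f a + f b := by
  obtain ⟨hax, hxb⟩ := hx
  rcases hax.eq_or_lt with rfl | hax
  · rw [add_left_cancel hxy]
  have hab : 0 < b - a := by linarith
  -- `x` and `y` are the convex combinations of `a, b` with swapped weights `t, 1 - t`.
  set t := (b - x) / (b - a)
  have ht : 0 ≤ t := div_nonneg (by linarith) hab.le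
  have ht' : 0 ≤ 1 - t := by rw [sub_nonneg, div_le_one hab]; linarith
  have htab : t * (b - a) = b - x := div_mul_cancel₀ _ hab.ne'
  have hx : t • a + (1 - t) • b = x := by rw [smul_eq_mul, smul_eq_mul]; linear_combination -htab
  have hy : (1 - t) • a + t • b = y := by
    rw [smul_eq_mul, smul_eq_mul]; linear_combination htab - hxy
  have h₁ := hf.2 ha hb ht ht' (by ring)
  have h₂ := hf.2 ha hb ht' ht (by ring)
  rw [hx] at h₁
  rw [hy] at h₂
  simp only [smul_eq_mul] at h₁ h₂
  linarith

theorem setIntegral_Iic_comp_add_right (f : ℝ → ℝ) (x c : ℝ) :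
    ∫ s in Iic x, f (s + c) = ∫ s in Iic (x + c), f s := by
  have := (measurePreserving_add_right volume c).setIntegral_preimage_emb
    (measurableEmbedding_addRight c) f (Iic (x + c))
  simpa using this

theorem setIntegral_Iic_pos {f : ℝ → ℝ} (hf : Integrable f) (hpos : ∀ s, 0 < f s) (x : ℝ) :
    0 < ∫ s in Iic x, f s := by
  rw [setIntegral_pos_iff_support_of_nonneg_ae (.of_forall fun s => (hpos s).le) hf.integrableOn,
    Function.support_eq_univ fun s => (hpos s).ne', univ_inter]
  simp

theorem hasDerivAt_setIntegral_Iic {E : Type*} [NormedAddCommGroup E] [NormedSpace ℝ E]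
    [CompleteSpace E] {f : ℝ → E} (hf : Continuous f) (hint : Integrable f) (x : ℝ) :
    HasDerivAt (fun y => ∫ s in Iic y, f s) (f x) x := by
  have hsplit : (fun y => ∫ s in Iic y, f s) =
      fun y => (∫ s in Iic 0, f s) + ∫ s in (0 : ℝ)..y, f s := funext fun y => by
    rw [← intervalIntegral.integral_Iic_sub_Iic hint.integrableOn hint.integrableOn,
      add_sub_cancel]
  rw [hsplit]
  exact (intervalIntegral.integral_hasDerivAt_right (hf.intervalIntegrable 0 x)
    (hf.stronglyMeasurableAtFilter _ _) hf.continuousAt).const_add _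

theorem ConvexOn.exp_neg_mul_setIntegral_Iic_le {φ : ℝ → ℝ} (hφ : ConvexOn ℝ univ φ)
    (hint : Integrable fun s => exp (-φ s)) {x y : ℝ} (hxy : x ≤ y) :
    exp (-φ y) * ∫ s in Iic x, exp (-φ s) ≤ exp (-φ x) * ∫ s in Iic y, exp (-φ s) := by
  have hpt : ∀ s ∈ Iic x, exp (-φ y) * exp (-φ s) ≤ exp (-φ x) * exp (-φ (s + (y - x))) := by
    intro s hs
    have := hφ.map_add_map_le_of_mem_Icc (mem_univ s) (mem_univ y) ⟨hs, hxy⟩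
      (by ring : x + (s + (y - x)) = s + y)
    rw [← exp_add, ← exp_add]
    exact exp_le_exp.2 (by linarith)
  calc exp (-φ y) * ∫ s in Iic x, exp (-φ s)
      = ∫ s in Iic x, exp (-φ y) * exp (-φ s) := (integral_const_mul _ _).symm
    _ ≤ ∫ s in Iic x, exp (-φ x) * exp (-φ (s + (y - x))) :=
      setIntegral_mono_on (hint.const_mul _).integrableOn
        ((hint.comp_add_right _).const_mul _).integrableOn measurableSet_Iic hpt
    _ = exp (-φ x) * ∫ s in Iic y, exp (-φ s) := by
      rw [integral_const_mul, setIntegral_Iic_comp_add_right (fun s => exp (-φ s)),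
        add_sub_cancel]

theorem ConvexOn.concaveOn_log_setIntegral_Iic_exp_neg {φ : ℝ → ℝ} (hφ : ConvexOn ℝ univ φ)
    (hint : Integrable fun s => exp (-φ s)) :
    ConcaveOn ℝ univ fun x => log (∫ s in Iic x, exp (-φ s)) := by
  have hcont : Continuous fun s => exp (-φ s) :=
    continuous_exp.comp (continuousOn_univ.1 (hφ.continuousOn isOpen_univ)).neg
  have hpos := setIntegral_Iic_pos hint fun s => exp_pos (-φ s)
  have hderiv x := (hasDerivAt_setIntegral_Iic hcont hint x).log (hpos x).ne'
  refine Antitone.concaveOn_univ_of_deriv (fun x => (hderiv x).differentiableAt) fun x y hxy => ?_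
  rw [(hderiv x).deriv, (hderiv y).deriv, div_le_div_iff₀ (hpos y) (hpos x)]
  exact hφ.exp_neg_mul_setIntegral_Iic_le hint hxy

/-- Prékopa's theorem, one-dimensional marginal form: if `φ : ℝ → ℝ` is convex with
`∫ e^{-φ} < ∞`, then `χ(u) = -log ∫_{s < -u} e^{-φ(s)} ds` is convex. -/
theorem stmt1 (φ : ℝ → ℝ) (hφ : ConvexOn ℝ Set.univ φ)
    (hint : Integrable (fun s => Real.exp (-φ s))) :
    ConvexOn ℝ Set.univ (fun u => -Real.log (∫ s in Set.Iio (-u), Real.exp (-φ s))) := by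
  have hχ : (fun u => -log (∫ s in Iio (-u), exp (-φ s))) =
      -((fun x => log (∫ s in Iic x, exp (-φ s))) ∘ (-LinearMap.id : ℝ →ₗ[ℝ] ℝ)) := by
    ext u
    simp [setIntegral_congr_set Iio_ae_eq_Iic]
  rw [hχ]
  exact ((hφ.concaveOn_log_setIntegral_Iic_exp_neg hint).comp_linearMap (-LinearMap.id)).neg
end

section
/- Let f: ℝ → ℝ be an increasing convex function bounded from below, and set φ(s) = f(s) - s. Define χ(u) = -log ∫_{s < -u} e^{-φ(s)} ds, assuming the integral is finite for all u. Then 0 ≤ χ'(u) ≤ 1 for all u (wherever χ is differentiable). -/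
open MeasureTheory Real Set

private lemma mono_deriv_nonneg {g : ℝ → ℝ} (hg : Monotone g) {x d : ℝ}
    (h : HasDerivAt g d x) : 0 ≤ d := by
  rw [hasDerivAt_iff_tendsto_slope] at h
  refine ge_of_tendsto h ?_
  filter_upwards [self_mem_nhdsWithin] with y hy
  rcases lt_or_gt_of_ne (hy : y ≠ x) with h' | h'
  · rw [slope_def_field]
    exact div_nonneg_iff.mpr (Or.inr ⟨by have := hg h'.le; linarith, by linarith⟩)
  · rw [slope_def_field]
    exact div_nonneg (by have := hg h'.le; linarith) (by linarith)

private lemma anti_deriv_nonpos {g : ℝ → ℝ} (hg : Antitone g) {x d : ℝ}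
    (h : HasDerivAt g d x) : d ≤ 0 := by
  have : 0 ≤ -d := mono_deriv_nonneg (g := fun y => -g y) (fun a b hab => neg_le_neg (hg hab))
    (h.neg)
  linarith

/-- For `f` increasing, convex and bounded below, `φ(s) = f(s) - s`, and
`χ(u) = -log ∫_{s < -u} e^{-φ(s)} ds` (the integrals being finite), any derivative of `χ`
lies in `[0, 1]`. -/
theorem stmt2 (f : ℝ → ℝ) (hconv : ConvexOn ℝ Set.univ f) (hmono : Monotone f)
    (hbdd : BddBelow (Set.range f))
    (hfin : ∀ u : ℝ, IntegrableOn (fun s => Real.exp (-(f s - s))) (Set.Iio (-u)))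
    (u d : ℝ)
    (hd : HasDerivAt (fun u => -Real.log (∫ s in Set.Iio (-u), Real.exp (-(f s - s)))) d u) :
    0 ≤ d ∧ d ≤ 1 := by
  set I : ℝ → ℝ := fun u => ∫ s in Set.Iio (-u), Real.exp (-(f s - s)) with hI
  -- positivity of I
  have Ipos : ∀ v : ℝ, 0 < I v := by
    intro v
    have h1 : 0 ≤ᵐ[volume.restrict (Set.Iio (-v))] fun s => Real.exp (-(f s - s)) :=
      Filter.Eventually.of_forall fun s => (Real.exp_pos _).le
    rw [hI]
    rw [setIntegral_pos_iff_support_of_nonneg_ae h1 (hfin v)]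
    have : (Function.support fun s => Real.exp (-(f s - s))) = Set.univ := by
      ext s; simp [Function.support, (Real.exp_pos _).ne']
    rw [this, Set.univ_inter]
    simp [Real.volume_Iio]
  -- I is antitone
  have Ianti : ∀ ⦃a b : ℝ⦄, a ≤ b → I b ≤ I a := by
    intro a b hab
    refine setIntegral_mono_set (hfin a) (Filter.Eventually.of_forall fun s => (Real.exp_pos _).le)
      (HasSubset.Subset.eventuallyLE ?_)
    exact Set.Iio_subset_Iio (by linarith)
  -- shift bound : exp (-(b-a)) * I a ≤ I b for a ≤ b
  have Ishift : ∀ ⦃a b : ℝ⦄, a ≤ b → Real.exp (-(b - a)) * I a ≤ I b := by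
    intro a b hab
    set t := b - a with ht
    have ht0 : 0 ≤ t := by linarith
    have heq : (fun x => (Set.Iio (-b)).indicator (fun s => Real.exp (-(f s - s))) (x - t))
        = (Set.Iio (-a)).indicator fun s => Real.exp (-(f (s - t) - (s - t))) := by
      ext x
      simp only [Set.indicator_apply, Set.mem_Iio]
      have hiff : x - t < -b ↔ x < -a := by constructor <;> intro <;> linarith
      rw [if_congr hiff rfl rfl]
    -- I b as an integral over Iio (-a) of the shifted function
    have hIb : I b = ∫ s in Set.Iio (-a), Real.exp (-(f (s - t) - (s - t))) := by
      have h1 := integral_sub_right_eq_self (μ := volume)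
        ((Set.Iio (-b)).indicator fun s => Real.exp (-(f s - s))) t
      rw [heq] at h1
      rw [hI]
      simp only
      rw [← integral_indicator measurableSet_Iio, ← h1, ← integral_indicator measurableSet_Iio]
    -- integrability of the shifted function on Iio (-a)
    have hint : IntegrableOn (fun s => Real.exp (-(f (s - t) - (s - t)))) (Set.Iio (-a)) := by
      have h1 : Integrable ((Set.Iio (-b)).indicator fun s => Real.exp (-(f s - s))) := by
        rw [integrable_indicator_iff measurableSet_Iio]; exact hfin b
      have h2 := h1.comp_sub_right t
      rw [heq] at h2
      rwa [← integrable_indicator_iff measurableSet_Iio]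
    -- pointwise bound
    have hpt : ∀ s : ℝ, Real.exp (-t) * Real.exp (-(f s - s))
        ≤ Real.exp (-(f (s - t) - (s - t))) := by
      intro s
      rw [← Real.exp_add]
      apply Real.exp_le_exp.2
      have := hmono (show s - t ≤ s by linarith)
      linarith
    calc Real.exp (-t) * I a = ∫ s in Set.Iio (-a), Real.exp (-t) * Real.exp (-(f s - s)) := by
          rw [hI]; simp only; rw [integral_const_mul]
      _ ≤ ∫ s in Set.Iio (-a), Real.exp (-(f (s - t) - (s - t))) :=
          setIntegral_mono ((hfin a).const_mul _) hint hpt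
      _ = I b := hIb.symm
  -- χ is monotone
  have hchi_mono : Monotone fun v => -Real.log (I v) := by
    intro a b hab
    simp only [neg_le_neg_iff]
    exact Real.log_le_log (Ipos b) (Ianti hab)
  -- χ - id is antitone
  have hchi_anti : Antitone fun v => -Real.log (I v) - v := by
    intro a b hab
    have h1 := Ishift hab
    have h2 : Real.log (Real.exp (-(b - a)) * I a) ≤ Real.log (I b) :=
      Real.log_le_log (mul_pos (Real.exp_pos _) (Ipos a)) h1
    rw [Real.log_mul (Real.exp_pos _).ne' (Ipos a).ne', Real.log_exp] at h2
    simp only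
    linarith
  constructor
  · exact mono_deriv_nonneg hchi_mono hd
  · have hd' : HasDerivAt (fun v => -Real.log (I v) - v) (d - 1) u := hd.sub (hasDerivAt_id u)
    have := anti_deriv_nonpos hchi_anti hd'
    linarith
end

section
/- Let μ be a probability measure on ℝ supported in [0,∞) such that t ↦ μ((t,∞))^{1/n} is concave on the interval where it is positive, for some positive integer n. Then for every p ≥ 1, (∫ t^p dμ)^{1/p} ≤ (n+1) ∫ t dμ. -/
open MeasureTheory Real Set

/-!
Write `F t = μ (Ioi t)`. Since `F = 1` on the negative reals, concavity of `F ^ (1/n)` on the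
interval where `F > 0` forces `F t ≥ (1 - t/s) ^ n` for `0 ≤ t ≤ s` whenever `F s > 0`.
Integrating this over `(0, s)` and using the layer-cake formula `∫ t dμ = ∫₀^∞ F` gives
`s ≤ (n + 1) ∫ t dμ`, so `μ` is carried by `[0, (n + 1) ∫ t dμ]`, and every `L^p` norm is
bounded by the supremum of the support.
-/

lemma ConcaveOn.one_sub_div_le {g : ℝ → ℝ} {D : Set ℝ} (hg : ConcaveOn ℝ D g)
    (hneg : ∀ x < 0, x ∈ D ∧ 1 ≤ g x) {s : ℝ} (hs : s ∈ D) (hs0 : 0 < s) (hgs : 0 ≤ g s)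
    {t : ℝ} (ht : 0 ≤ t) (hts : t ≤ s) : 1 - t / s ≤ g t := by
  -- `t` is a convex combination of `-h` and `s`; let `h → 0⁺`.
  have chord : ∀ h > 0, (s - t) / (s + h) ≤ g t := by
    intro h hh
    have hsh : 0 < s + h := by linarith
    have ha : 0 ≤ (s - t) / (s + h) := div_nonneg (by linarith) hsh.le
    have hb : 0 ≤ (t + h) / (s + h) := div_nonneg (by linarith) hsh.le
    obtain ⟨hD, hg1⟩ := hneg (-h) (by linarith)
    have hconc := hg.2 hD hs ha hb (by field_simp; ring)
    have hcomb : (s - t) / (s + h) * -h + (t + h) / (s + h) * s = t := by field_simp; ring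
    simp only [smul_eq_mul, hcomb] at hconc
    linarith [mul_le_mul_of_nonneg_left hg1 ha, mul_nonneg hb hgs]
  have hlim : Filter.Tendsto (fun h => (s - t) / (s + h)) (nhdsWithin 0 (Ioi 0))
      (nhds ((s - t) / s)) := by
    have : ContinuousAt (fun h => (s - t) / (s + h)) 0 := by
      fun_prop (disch := simp [hs0.ne'])
    simpa using this.tendsto.mono_left nhdsWithin_le_nhds
  rw [one_sub_div hs0.ne']
  exact le_of_tendsto hlim (eventually_nhdsWithin_of_forall chord)

lemma lintegral_one_sub_div_pow {s : ℝ} (hs : 0 < s) (n : ℕ) :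
    ∫⁻ t in Ioo 0 s, ENNReal.ofReal ((1 - t / s) ^ n) = ENNReal.ofReal (s / (n + 1)) := by
  have hnn : 0 ≤ᵐ[volume.restrict (Ioo 0 s)] fun t => (1 - t / s) ^ n := by
    refine (ae_restrict_iff' measurableSet_Ioo).2 (Filter.Eventually.of_forall fun t ht => ?_)
    have : 0 ≤ 1 - t / s := by rw [sub_nonneg, div_le_one hs]; exact ht.2.le
    positivity
  have hint : IntegrableOn (fun t => (1 - t / s) ^ n) (Ioo 0 s) :=
    (Continuous.integrableOn_Icc (by fun_prop)).mono_set Ioo_subset_Icc_self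
  rw [← ofReal_integral_eq_lintegral_ofReal hint hnn, ← integral_Ioc_eq_integral_Ioo,
    ← intervalIntegral.integral_of_le hs.le,
    intervalIntegral.integral_comp_div (fun u => (1 - u) ^ n) hs.ne',
    intervalIntegral.integral_comp_sub_left (fun u => u ^ n) 1]
  norm_num [integral_pow, hs.ne']
  ring_nf

lemma rpow_integral_rpow_le_of_ae_le {α : Type*} [MeasurableSpace α] {μ : Measure α}
    [IsProbabilityMeasure μ] {f : α → ℝ} {C p : ℝ} (hp : 0 < p) (hf0 : ∀ᵐ x ∂μ, 0 ≤ f x)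
    (hfC : ∀ᵐ x ∂μ, f x ≤ C) : (∫ x, f x ^ p ∂μ) ^ (1 / p) ≤ C := by
  obtain ⟨x, hx0, hxC⟩ := (hf0.and hfC).exists
  have hC : 0 ≤ C := hx0.trans hxC
  have hbound : ∀ᵐ x ∂μ, ‖f x ^ p‖ ≤ C ^ p := by
    filter_upwards [hf0, hfC] with x hx0 hxC
    rw [norm_of_nonneg (rpow_nonneg hx0 p)]
    exact rpow_le_rpow hx0 hxC hp.le
  have hint : ∫ x, f x ^ p ∂μ ≤ C ^ p := by
    simpa using (le_abs_self _).trans (norm_integral_le_of_norm_le_const hbound)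
  calc (∫ x, f x ^ p ∂μ) ^ (1 / p) ≤ (C ^ p) ^ (1 / p) :=
        rpow_le_rpow (integral_nonneg_of_ae <| hf0.mono fun _ hx => rpow_nonneg hx p) hint
          (by positivity)
    _ = C := by rw [one_div, rpow_rpow_inv hC hp.ne']

lemma MeasureTheory.Integrable.of_rpow {α : Type*} [MeasurableSpace α] {μ : Measure α}
    [IsFiniteMeasure μ] {f : α → ℝ} {p : ℝ} (hp : 1 ≤ p) (hf : AEStronglyMeasurable f μ)
    (hf0 : ∀ᵐ x ∂μ, 0 ≤ f x)
    (hfp : Integrable (fun x => f x ^ p) μ) : Integrable f μ := by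
  have hnorm : Integrable (fun x => ‖f x‖ ^ p) μ :=
    hfp.congr (by filter_upwards [hf0] with x hx; rw [norm_of_nonneg hx])
  exact (integrable_norm_iff hf).1 <| by
    simpa using integrable_norm_rpow_of_le hf zero_le_one (by linarith) hp hnorm

lemma measure_Ioi_eq_one_of_neg {μ : Measure ℝ} [IsProbabilityMeasure μ]
    (hsupp : μ (Iio 0) = 0) {x : ℝ} (hx : x < 0) : μ (Ioi x) = 1 :=
  (prob_compl_eq_zero_iff measurableSet_Ioi).1 <|
    measure_mono_null (fun y (hy : ¬x < y) => (not_lt.1 hy).trans_lt hx) hsupp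

lemma ae_nonneg_of_measure_Iio_zero {μ : Measure ℝ} (h : μ (Iio 0) = 0) :
    ∀ᵐ t ∂μ, 0 ≤ t :=
  ae_iff.2 <| measure_mono_null (fun _ => not_le.1) h

lemma one_sub_div_pow_le_measure_Ioi {n : ℕ} (hn : n ≠ 0) {μ : Measure ℝ}
    [IsProbabilityMeasure μ] (hsupp : μ (Iio 0) = 0)
    (hconc : ConcaveOn ℝ {t : ℝ | 0 < (μ (Ioi t)).toReal}
      (fun t => (μ (Ioi t)).toReal ^ ((1 : ℝ) / n)))
    {s : ℝ} (hs : 0 < s) (hμs : μ (Ioi s) ≠ 0) {t : ℝ} (ht : 0 ≤ t) (hts : t ≤ s) :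
    ENNReal.ofReal ((1 - t / s) ^ n) ≤ μ (Ioi t) := by
  have hroot : 1 - t / s ≤ (μ (Ioi t)).toReal ^ ((1 : ℝ) / n) :=
    hconc.one_sub_div_le (fun x hx => by simp [measure_Ioi_eq_one_of_neg hsupp hx])
      (ENNReal.toReal_pos hμs (measure_ne_top μ _)) hs (rpow_nonneg ENNReal.toReal_nonneg _)
      ht hts
  rw [← ENNReal.ofReal_toReal (measure_ne_top μ (Ioi t))]
  refine ENNReal.ofReal_le_ofReal ?_
  calc (1 - t / s) ^ n ≤ ((μ (Ioi t)).toReal ^ ((1 : ℝ) / n)) ^ n :=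
        pow_le_pow_left₀ (sub_nonneg.2 ((div_le_one hs).2 hts)) hroot n
    _ = (μ (Ioi t)).toReal := by rw [one_div, rpow_inv_natCast_pow ENNReal.toReal_nonneg hn]

lemma le_mul_integral_of_measure_Ioi_ne_zero {n : ℕ} (hn : n ≠ 0) {μ : Measure ℝ}
    [IsProbabilityMeasure μ] (hsupp : μ (Iio 0) = 0)
    (hconc : ConcaveOn ℝ {t : ℝ | 0 < (μ (Ioi t)).toReal}
      (fun t => (μ (Ioi t)).toReal ^ ((1 : ℝ) / n)))
    (hint : Integrable (fun t : ℝ => t) μ) {s : ℝ} (hs : 0 < s) (hμs : μ (Ioi s) ≠ 0) :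
    s ≤ (n + 1) * ∫ t, t ∂μ := by
  have hae0 := ae_nonneg_of_measure_Iio_zero hsupp
  rw [← div_le_iff₀' (by positivity),
    ← ENNReal.ofReal_le_ofReal_iff (integral_nonneg_of_ae hae0)]
  calc ENNReal.ofReal (s / (n + 1))
      = ∫⁻ t in Ioo 0 s, ENNReal.ofReal ((1 - t / s) ^ n) :=
        (lintegral_one_sub_div_pow hs n).symm
    _ ≤ ∫⁻ t in Ioo 0 s, μ (Ioi t) :=
        setLIntegral_mono (Antitone.measurable fun _ _ hab => measure_mono (Ioi_subset_Ioi hab))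
          fun t ht => one_sub_div_pow_le_measure_Ioi hn hsupp hconc hs hμs ht.1.le ht.2.le
    _ ≤ ∫⁻ t in Ioi 0, μ (Ioi t) := lintegral_mono_set Ioo_subset_Ioi_self
    _ = ENNReal.ofReal (∫ t, t ∂μ) := by
        rw [ofReal_integral_eq_lintegral_ofReal hint hae0,
          lintegral_eq_lintegral_meas_lt μ hae0 aemeasurable_id]
        rfl

lemma ae_le_mul_integral {n : ℕ} (hn : n ≠ 0) {μ : Measure ℝ}
    [IsProbabilityMeasure μ] (hsupp : μ (Iio 0) = 0)
    (hconc : ConcaveOn ℝ {t : ℝ | 0 < (μ (Ioi t)).toReal}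
      (fun t => (μ (Ioi t)).toReal ^ ((1 : ℝ) / n)))
    (hint : Integrable (fun t : ℝ => t) μ) :
    ∀ᵐ t ∂μ, t ≤ (n + 1) * ∫ t, t ∂μ := by
  rw [ae_le_const_iff_forall_gt_measure_zero]
  intro b hb
  obtain ⟨s, hSs, hsb⟩ := exists_between hb
  have hmean : 0 ≤ ∫ t, t ∂μ := integral_nonneg_of_ae (ae_nonneg_of_measure_Iio_zero hsupp)
  have hs : 0 < s := (mul_nonneg (by positivity) hmean).trans_lt hSs
  by_contra hμb
  exact hSs.not_ge <| le_mul_integral_of_measure_Ioi_ne_zero hn hsupp hconc hint hs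
    fun hμs => hμb (measure_mono_null (fun _ hx => hsb.trans_le hx) hμs)

/-- Reverse Hölder bound for measures with concave `n`-th root of the tail function:
if `μ` is a probability measure supported in `[0,∞)` and `t ↦ μ((t,∞))^{1/n}` is concave
where positive, then `(∫ t^p dμ)^{1/p} ≤ (n+1) ∫ t dμ` for all `p ≥ 1`. -/
theorem stmt8 (n : ℕ) (hn : 0 < n) (μ : Measure ℝ) [IsProbabilityMeasure μ]
    (hsupp : μ (Set.Iio 0) = 0)
    (hconc : ConcaveOn ℝ {t : ℝ | 0 < (μ (Set.Ioi t)).toReal}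
      (fun t => (μ (Set.Ioi t)).toReal ^ ((1 : ℝ) / n)))
    (p : ℝ) (hp : 1 ≤ p) :
    (∫ t, t ^ p ∂μ) ^ (1 / p) ≤ (n + 1) * ∫ t, t ∂μ := by
  have hae0 := ae_nonneg_of_measure_Iio_zero hsupp
  by_cases hint : Integrable (fun t : ℝ => t) μ
  · exact rpow_integral_rpow_le_of_ae_le (by linarith) hae0
      (ae_le_mul_integral hn.ne' hsupp hconc hint)
  -- Otherwise both Bochner integrals take the junk value `0`.
  have hintp : ¬Integrable (fun t : ℝ => t ^ p) μ :=
    fun h => hint (h.of_rpow hp aestronglyMeasurable_id hae0)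
  rw [integral_undef hintp, integral_undef hint, zero_rpow (by positivity), mul_zero]
end

section
/- Suppose u ≤ 0 is measurable on a probability space (X, dV), Z(γ) := ∫_X e^{-γu}dV is finite for γ ∈ (0,c), and the lower bound (d/dγ)log Z(γ) ≥ (1/A)·1/(c-γ) - B(γ^{-2} + δ^{-2}) holds on (0,c) for constants A, B > 0 and δ ∈ (0,1). Then for every γ ∈ (0,c): Z(γ) ≥ e^{-b(γ^{-1} + γδ^{-2})} / (c-γ)^{1/A} for a constant b depending only on A and B. -/
/-!
Since `u ≤ 0` and `dV` is a probability measure, `Z ≥ 1`, so `log Z(γ/2) ≥ 0`. Integrating the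
lower bound for `(log Z)'` over `[γ/2, γ]` against its explicit primitive
`-(1/A) log (c - t) + B/t - B δ⁻² t` gives
`log Z(γ) ≥ -(1/A) log (c - γ) + (1/A) log (c - γ/2) - B/γ - (B/2) δ⁻² γ`,
and `log (c - γ/2) ≥ log (γ/2) ≥ -2/γ` turns this into the claim with `b = 2/A + B`.
`Z` is differentiable on `(0, c)` by differentiation under the integral sign: near `γ₀`, the
derivative `-u e^{-γu}` is dominated by a multiple of the integrable `e^{-γ₁u}` for any `γ₁ > γ₀`.
-/

open MeasureTheory Real Set

lemma exp_neg_mul_mul_neg_le {u t s : ℝ} (hts : t < s) :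
    exp (-t * u) * -u ≤ (s - t)⁻¹ * exp (-s * u) := by
  have hst : 0 < s - t := sub_pos.2 hts
  set y := (s - t) * -u with hy_def
  have hy : y * exp (-y) ≤ 1 :=
    (mul_exp_neg_le_exp_neg_one y).trans (exp_le_one_iff.2 (by norm_num))
  have hsplit : exp (-t * u) = exp (-y) * exp (-s * u) := by
    rw [← exp_add, hy_def]; ring_nf
  calc exp (-t * u) * -u = (s - t)⁻¹ * (y * exp (-y)) * exp (-s * u) := by
        rw [hsplit, hy_def]; field_simp
    _ ≤ (s - t)⁻¹ * 1 * exp (-s * u) := by gcongr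
    _ = (s - t)⁻¹ * exp (-s * u) := by rw [mul_one]

lemma hasDerivAt_integral_exp_neg_mul {X : Type*} [MeasurableSpace X] {μ : Measure X}
    {u : X → ℝ} (hu : ∀ x, u x ≤ 0) (hm : AEMeasurable u μ) {γ₀ γ₁ : ℝ} (hγ : γ₀ < γ₁)
    (h₀ : Integrable (fun x => exp (-γ₀ * u x)) μ)
    (h₁ : Integrable (fun x => exp (-γ₁ * u x)) μ) :
    HasDerivAt (fun γ => ∫ x, exp (-γ * u x) ∂μ) (∫ x, exp (-γ₀ * u x) * -u x ∂μ) γ₀ := by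
  set ε := (γ₁ - γ₀) / 2 with hε_def
  have hε : 0 < ε := by linarith
  have hmeas : ∀ t : ℝ, AEStronglyMeasurable (fun x => exp (-t * u x)) μ := fun t =>
    (hm.const_mul (-t)).exp.aestronglyMeasurable
  refine (hasDerivAt_integral_of_dominated_loc_of_deriv_le
    (F' := fun t x => exp (-t * u x) * -u x) (bound := fun x => ε⁻¹ * exp (-γ₁ * u x))
    (Metric.ball_mem_nhds γ₀ hε) (.of_forall hmeas) h₀
    ((hm.const_mul (-γ₀)).exp.mul hm.neg).aestronglyMeasurable ?_ (h₁.const_mul _) ?_).2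
  · refine .of_forall fun x t ht => ?_
    have ht' : ε ≤ γ₁ - t := by linarith [(abs_lt.1 (Metric.mem_ball.1 ht)).2]
    rw [Real.norm_of_nonneg (mul_nonneg (exp_pos _).le (neg_nonneg.2 (hu x)))]
    calc exp (-t * u x) * -u x ≤ (γ₁ - t)⁻¹ * exp (-γ₁ * u x) :=
          exp_neg_mul_mul_neg_le (by linarith)
      _ ≤ ε⁻¹ * exp (-γ₁ * u x) := by gcongr
  · refine .of_forall fun x t _ => ?_
    simpa using ((hasDerivAt_neg t).mul_const (u x)).exp

lemma one_le_integral_exp_neg_mul {X : Type*} [MeasurableSpace X] {μ : Measure X}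
    [IsProbabilityMeasure μ] {u : X → ℝ} (hu : ∀ x, u x ≤ 0) {γ : ℝ} (hγ : 0 ≤ γ)
    (hint : Integrable (fun x => exp (-γ * u x)) μ) :
    1 ≤ ∫ x, exp (-γ * u x) ∂μ := by
  calc (1 : ℝ) = ∫ _, 1 ∂μ := by simp
    _ ≤ ∫ x, exp (-γ * u x) ∂μ :=
        integral_mono (integrable_const 1) hint fun x => one_le_exp (by nlinarith [hu x])

lemma sub_le_sub_of_hasDerivAt_le_deriv {f g g' : ℝ → ℝ} {a b : ℝ} (hab : a ≤ b)
    (hf : ∀ t ∈ Icc a b, DifferentiableAt ℝ f t) (hg : ∀ t ∈ Icc a b, HasDerivAt g (g' t) t)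
    (hle : ∀ t ∈ Ioo a b, g' t ≤ deriv f t) :
    g b - g a ≤ f b - f a := by
  have hdiff : ∀ t ∈ Icc a b, DifferentiableAt ℝ (f - g) t := fun t ht =>
    (hf t ht).sub (hg t ht).differentiableAt
  have hmono : MonotoneOn (f - g) (Icc a b) := by
    refine monotoneOn_of_deriv_nonneg (convex_Icc a b)
      (fun t ht => (hdiff t ht).continuousAt.continuousWithinAt) ?_ ?_ <;> rw [interior_Icc]
    · exact fun t ht => (hdiff t (Ioo_subset_Icc_self ht)).differentiableWithinAt
    · intro t ht
      have ht' := Ioo_subset_Icc_self ht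
      rw [deriv_sub (hf t ht') (hg t ht').differentiableAt, (hg t ht').deriv, sub_nonneg]
      exact hle t ht
  have := hmono (left_mem_Icc.2 hab) (right_mem_Icc.2 hab) hab
  simp only [Pi.sub_apply] at this
  linarith

noncomputable def logDerivBoundPrimitive (A B c δ t : ℝ) : ℝ :=
  -(1 / A) * log (c - t) + B * t⁻¹ - B * δ⁻¹ ^ 2 * t

lemma hasDerivAt_logDerivBoundPrimitive (A B δ : ℝ) {c t : ℝ} (ht : t ∈ Ioo 0 c) :
    HasDerivAt (logDerivBoundPrimitive A B c δ)
      (1 / A * (1 / (c - t)) - B * (t⁻¹ ^ 2 + δ⁻¹ ^ 2)) t := by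
  have hct : c - t ≠ 0 := (sub_pos.2 ht.2).ne'
  have hlog := (((hasDerivAt_id' t).const_sub c).log hct).const_mul (-(1 / A))
  have hinv := (hasDerivAt_inv ht.1.ne').const_mul B
  refine ((hlog.add hinv).sub ((hasDerivAt_id' t).const_mul (B * δ⁻¹ ^ 2))).congr_deriv ?_
  field_simp
  ring

lemma le_of_deriv_ge_logDerivBound {f : ℝ → ℝ} {A B c δ γ : ℝ} (hA : 0 < A) (hB : 0 ≤ B)
    (hf : ∀ t ∈ Ioo 0 c, DifferentiableAt ℝ f t)
    (hf' : ∀ t ∈ Ioo 0 c, 1 / A * (1 / (c - t)) - B * (t⁻¹ ^ 2 + δ⁻¹ ^ 2) ≤ deriv f t)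
    (hγ : γ ∈ Ioo 0 c) (hf₀ : 0 ≤ f (γ / 2)) :
    -(1 / A) * log (c - γ) - (2 / A + B) * (γ⁻¹ + γ * δ⁻¹ ^ 2) ≤ f γ := by
  obtain ⟨hγ0, hγc⟩ := hγ
  have hsub : Icc (γ / 2) γ ⊆ Ioo 0 c := fun t ht => ⟨by linarith [ht.1], by linarith [ht.2]⟩
  have hint := sub_le_sub_of_hasDerivAt_le_deriv (by linarith) (fun t ht => hf t (hsub ht))
    (fun t ht => hasDerivAt_logDerivBoundPrimitive A B δ (hsub ht))
    (fun t ht => hf' t (hsub (Ioo_subset_Icc_self ht)))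
  have hlog : -(2 * γ⁻¹) ≤ log (c - γ / 2) :=
    calc -(2 * γ⁻¹) ≤ 1 - (γ / 2)⁻¹ := by rw [inv_div, div_eq_mul_inv]; linarith
      _ ≤ log (γ / 2) := one_sub_inv_le_log_of_pos (by positivity)
      _ ≤ log (c - γ / 2) := log_le_log (by positivity) (by linarith)
  have hlogA := mul_le_mul_of_nonneg_left hlog (one_div_pos.2 hA).le
  have hrest : 0 ≤ (2 / A + B / 2) * (γ * δ⁻¹ ^ 2) := by positivity
  have hhalf : (γ / 2)⁻¹ = 2 * γ⁻¹ := by rw [inv_div, div_eq_mul_inv]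
  simp only [logDerivBoundPrimitive, hhalf] at hint
  linear_combination hint + hlogA + hrest + hf₀

/-- Integrating the differential lower bound on `(log Z)'` yields a universal lower bound
on `Z(γ) = ∫ e^{-γu} dV`: there is a constant `b` depending only on `A` and `B` such that
`Z(γ) ≥ e^{-b(γ⁻¹ + γδ⁻²)}/(c-γ)^{1/A}` for all `γ ∈ (0,c)`. -/
theorem stmt18 (A B : ℝ) (hA : 0 < A) (hB : 0 < B) :
    ∃ b : ℝ, ∀ (X : Type) (_ : MeasurableSpace X) (dV : Measure X),
      IsProbabilityMeasure dV →
      ∀ (u : X → ℝ), (∀ x, u x ≤ 0) → Measurable u →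
      ∀ (c δ : ℝ), 0 < c → δ ∈ Set.Ioo (0:ℝ) 1 →
      (∀ γ ∈ Set.Ioo 0 c, Integrable (fun x => Real.exp (-γ * u x)) dV) →
      (∀ γ ∈ Set.Ioo 0 c,
        1 / A * (1 / (c - γ)) - B * (γ⁻¹ ^ 2 + δ⁻¹ ^ 2) ≤
          deriv (fun γ => Real.log (∫ x, Real.exp (-γ * u x) ∂dV)) γ) →
      ∀ γ ∈ Set.Ioo 0 c,
        Real.exp (-b * (γ⁻¹ + γ * δ⁻¹ ^ 2)) / (c - γ) ^ (1 / A) ≤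
          ∫ x, Real.exp (-γ * u x) ∂dV := by
  refine ⟨2 / A + B, fun X _ dV _ u hu hm c δ _ _ hint hderiv γ hγ => ?_⟩
  have hZ : ∀ t ∈ Ioo 0 c, 1 ≤ ∫ x, exp (-t * u x) ∂dV := fun t ht =>
    one_le_integral_exp_neg_mul hu ht.1.le (hint t ht)
  have hdiff : ∀ t ∈ Ioo 0 c,
      DifferentiableAt ℝ (fun t => log (∫ x, exp (-t * u x) ∂dV)) t := by
    intro t ht
    have hmid : (t + c) / 2 ∈ Ioo 0 c := ⟨by linarith [ht.1, ht.2], by linarith [ht.2]⟩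
    refine (hasDerivAt_integral_exp_neg_mul hu hm.aemeasurable (by linarith [ht.2]) (hint t ht)
      (hint _ hmid)).differentiableAt.log ?_
    linarith [hZ t ht]
  have hlog := le_of_deriv_ge_logDerivBound hA hB.le hdiff hderiv hγ
    (log_nonneg (hZ _ ⟨half_pos hγ.1, by linarith [hγ.1, hγ.2]⟩))
  calc exp (-(2 / A + B) * (γ⁻¹ + γ * δ⁻¹ ^ 2)) / (c - γ) ^ (1 / A)
      = exp (-(1 / A) * log (c - γ) - (2 / A + B) * (γ⁻¹ + γ * δ⁻¹ ^ 2)) := by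
        rw [rpow_def_of_pos (sub_pos.2 hγ.2), ← exp_sub]; ring_nf
    _ ≤ exp (log (∫ x, exp (-γ * u x) ∂dV)) := exp_le_exp.2 hlog
    _ = ∫ x, exp (-γ * u x) ∂dV := exp_log (by linarith [hZ γ hγ])
end
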